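/- arXiv:math-ph/0207016 — 6 statements merged into one kernel-verified Lean document; each statement's English description precedes it below -/
import Mathlib

section
/- For smooth vector-functions m, n : ℝ → ℝ³ and smooth χ : ℝ → ℝ, the first-order differential operators R(m) = m^a(t)∂_{x_a} + m^a_t(t)∂_{u^a} − m^a_{tt}(t) x_a ∂_p and Z(χ) = χ(t)∂_p, viewed as vector fields on the space with coordinates (t, x₁, x₂, x₃, u¹, u², u³, p), satisfy the commutation relations [R(m), R(n)] = Z(m_tt · n − m · n_tt), [∂_t, R(m)] = R(m_t), [∂_t, Z(χ)] = Z(χ_t), and [Z(χ), R(m)] = 0. -/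
/-- The coordinate space `(t, x, u, p)` for the Navier-Stokes symmetry vector fields. -/
abbrev JetSpace := ℝ × (Fin 3 → ℝ) × (Fin 3 → ℝ) × ℝ

/-- Lie bracket of vector fields. -/
noncomputable def bracket (X Y : JetSpace → JetSpace) : JetSpace → JetSpace :=
  fun v => fderiv ℝ Y v (X v) - fderiv ℝ X v (Y v)

/-- The vector field `R(m) = mᵃ(t)∂ₐ + mᵃ_t(t)∂_{uᵃ} − mᵃ_tt(t) xₐ ∂_p`. -/
noncomputable def Rop (m : ℝ → Fin 3 → ℝ) : JetSpace → JetSpace :=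
  fun v => (0, m v.1, fun i => deriv (fun s => m s i) v.1,
    -(∑ i : Fin 3, deriv (deriv (fun s => m s i)) v.1 * v.2.1 i))

/-- The vector field `Z(χ) = χ(t)∂_p`. -/
noncomputable def Zop (χ : ℝ → ℝ) : JetSpace → JetSpace := fun v => (0, 0, 0, χ v.1)

/-- The vector field `∂_t`. -/
def Dt : JetSpace → JetSpace := fun _ => (1, 0, 0, 0)

lemma fderiv_apply_line {F : JetSpace → JetSpace} {v : JetSpace} (w : JetSpace)
    (hF : DifferentiableAt ℝ F v) {D : JetSpace}
    (h : HasDerivAt (fun s : ℝ => F (v + s • w)) D 0) : fderiv ℝ F v w = D := by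
  have hline : HasDerivAt (fun s : ℝ => v + s • w) w 0 := by
    simpa using ((hasDerivAt_id (0:ℝ)).smul_const w).const_add v
  have hF' : HasFDerivAt F (fderiv ℝ F v) (v + (0:ℝ) • w) := by
    simpa using hF.hasFDerivAt
  have h2 := hF'.comp_hasDerivAt 0 hline
  exact (h2.unique h)

lemma hasDerivAt_comp_line {f : ℝ → ℝ} (hf : ContDiff ℝ ((⊤:ℕ∞):WithTop ℕ∞) f) (a b : ℝ) :
    HasDerivAt (fun s : ℝ => f (a + s * b)) (deriv f a * b) 0 := by
  have base : HasDerivAt (fun s : ℝ => a + s * b) b 0 := by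
    simpa using ((hasDerivAt_id (0:ℝ)).mul_const b).const_add a
  have hf' : HasDerivAt f (deriv f a) (a + 0 * b) := by
    simpa using ((hf.differentiable (by simp)) (a + 0*b)).hasDerivAt
  exact hf'.comp 0 base

lemma smooth_deriv {f : ℝ → ℝ} (hf : ContDiff ℝ ((⊤:ℕ∞):WithTop ℕ∞) f) :
    ContDiff ℝ ((⊤:ℕ∞):WithTop ℕ∞) (deriv f) :=
  (contDiff_infty_iff_deriv.mp hf).2

lemma differentiable_Rop (m : ℝ → Fin 3 → ℝ) (hm : ContDiff ℝ ((⊤:ℕ∞):WithTop ℕ∞) m) :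
    Differentiable ℝ (Rop m) := by
  intro v
  have h0 : ∀ i, ContDiff ℝ ((⊤:ℕ∞):WithTop ℕ∞) (fun s => m s i) := fun i => contDiff_pi.mp hm i
  have h1 : ∀ i, ContDiff ℝ ((⊤:ℕ∞):WithTop ℕ∞) (deriv (fun s => m s i)) :=
    fun i => smooth_deriv (h0 i)
  have h2 : ∀ i, ContDiff ℝ ((⊤:ℕ∞):WithTop ℕ∞) (deriv (deriv (fun s => m s i))) :=
    fun i => smooth_deriv (h1 i)
  refine DifferentiableAt.prodMk (differentiableAt_const _) (DifferentiableAt.prodMk ?_ (DifferentiableAt.prodMk ?_ ?_))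
  · exact ((hm.differentiable (by simp)) v.1).comp v differentiableAt_fst
  · exact differentiableAt_pi.2 fun i =>
      (((h1 i).differentiable (by simp)) v.1).comp v differentiableAt_fst
  · refine (DifferentiableAt.fun_sum fun i _ => DifferentiableAt.mul ?_ ?_).neg
    · exact (((h2 i).differentiable (by simp)) v.1).comp v differentiableAt_fst
    · exact ((ContinuousLinearMap.proj i : (Fin 3 → ℝ) →L[ℝ] ℝ).comp
        ((ContinuousLinearMap.fst ℝ (Fin 3 → ℝ) ((Fin 3 → ℝ) × ℝ)).comp
          (ContinuousLinearMap.snd ℝ ℝ ((Fin 3 → ℝ) × (Fin 3 → ℝ) × ℝ)))).differentiableAt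

lemma fderiv_Rop (m : ℝ → Fin 3 → ℝ) (hm : ContDiff ℝ ((⊤:ℕ∞):WithTop ℕ∞) m) (v w : JetSpace) :
    fderiv ℝ (Rop m) v w =
      (0, (fun i => deriv (fun s => m s i) v.1 * w.1),
          (fun i => deriv (deriv (fun s => m s i)) v.1 * w.1),
       -(∑ i : Fin 3, (deriv (deriv (deriv (fun s => m s i))) v.1 * w.1 * v.2.1 i
            + deriv (deriv (fun s => m s i)) v.1 * w.2.1 i))) := by
  have h0 : ∀ i, ContDiff ℝ ((⊤:ℕ∞):WithTop ℕ∞) (fun s => m s i) := fun i => contDiff_pi.mp hm i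
  have h1 : ∀ i, ContDiff ℝ ((⊤:ℕ∞):WithTop ℕ∞) (deriv (fun s => m s i)) :=
    fun i => smooth_deriv (h0 i)
  have h2 : ∀ i, ContDiff ℝ ((⊤:ℕ∞):WithTop ℕ∞) (deriv (deriv (fun s => m s i))) :=
    fun i => smooth_deriv (h1 i)
  apply fderiv_apply_line w (differentiable_Rop m hm v)
  have key : (fun s : ℝ => Rop m (v + s • w)) =
      fun s : ℝ => ((0:ℝ), m (v.1 + s * w.1),
        fun i => deriv (fun u => m u i) (v.1 + s * w.1),
        -(∑ i : Fin 3, deriv (deriv (fun u => m u i)) (v.1 + s * w.1)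
            * (v.2.1 i + s * w.2.1 i))) := by
    funext s
    simp [Rop, Prod.fst_add, Prod.snd_add, Prod.smul_fst, Prod.smul_snd,
      Pi.add_apply, Pi.smul_apply, smul_eq_mul]
  rw [key]
  refine HasDerivAt.prodMk (hasDerivAt_const (0:ℝ) (0:ℝ)) (HasDerivAt.prodMk ?_ (HasDerivAt.prodMk ?_ ?_))
  · exact hasDerivAt_pi.2 fun i => hasDerivAt_comp_line (h0 i) v.1 w.1
  · exact hasDerivAt_pi.2 fun i => hasDerivAt_comp_line (h1 i) v.1 w.1
  · refine HasDerivAt.neg (HasDerivAt.fun_sum fun i _ => ?_)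
    have hg := hasDerivAt_comp_line (h2 i) v.1 w.1
    have hh : HasDerivAt (fun s : ℝ => v.2.1 i + s * w.2.1 i) (w.2.1 i) 0 := by
      simpa using ((hasDerivAt_id (0:ℝ)).mul_const (w.2.1 i)).const_add (v.2.1 i)
    simpa using hg.fun_mul hh

lemma differentiable_Zop (χ : ℝ → ℝ) (hχ : ContDiff ℝ ((⊤:ℕ∞):WithTop ℕ∞) χ) :
    Differentiable ℝ (Zop χ) := fun v =>
  DifferentiableAt.prodMk (differentiableAt_const _) (DifferentiableAt.prodMk (differentiableAt_const _)
    (DifferentiableAt.prodMk (differentiableAt_const _)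
      (((hχ.differentiable (by simp)) v.1).comp v differentiableAt_fst)))

lemma fderiv_Zop (χ : ℝ → ℝ) (hχ : ContDiff ℝ ((⊤:ℕ∞):WithTop ℕ∞) χ) (v w : JetSpace) :
    fderiv ℝ (Zop χ) v w = (0, 0, 0, deriv χ v.1 * w.1) := by
  apply fderiv_apply_line w (differentiable_Zop χ hχ v)
  have key : (fun s : ℝ => Zop χ (v + s • w)) =
      fun s : ℝ => ((0:ℝ), (0 : Fin 3 → ℝ), (0 : Fin 3 → ℝ), χ (v.1 + s * w.1)) := by
    funext s; simp [Zop, Prod.fst_add, Prod.smul_fst, smul_eq_mul]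
  rw [key]
  exact HasDerivAt.prodMk (hasDerivAt_const _ _) (HasDerivAt.prodMk (hasDerivAt_const _ _)
    (HasDerivAt.prodMk (hasDerivAt_const _ _) (hasDerivAt_comp_line hχ v.1 w.1)))

lemma fderiv_Dt (v : JetSpace) : fderiv ℝ Dt v = 0 := fderiv_const_apply _

theorem ANS_commutation_relations (m n : ℝ → Fin 3 → ℝ) (χ : ℝ → ℝ)
    (hm : ContDiff ℝ (⊤ : ℕ∞) m) (hn : ContDiff ℝ (⊤ : ℕ∞) n) (hχ : ContDiff ℝ (⊤ : ℕ∞) χ) :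
    bracket (Rop m) (Rop n)
        = Zop (fun t => (∑ i : Fin 3, deriv (deriv (fun s => m s i)) t * n t i)
            - ∑ i : Fin 3, m t i * deriv (deriv (fun s => n s i)) t) ∧
    bracket Dt (Rop m) = Rop (fun t i => deriv (fun s => m s i) t) ∧
    bracket Dt (Zop χ) = Zop (deriv χ) ∧
    bracket (Zop χ) (Rop m) = 0 := by
  have hm' : ContDiff ℝ ((⊤:ℕ∞):WithTop ℕ∞) m := hm.of_le (by simp)
  have hn' : ContDiff ℝ ((⊤:ℕ∞):WithTop ℕ∞) n := hn.of_le (by simp)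
  have hχ' : ContDiff ℝ ((⊤:ℕ∞):WithTop ℕ∞) χ := hχ.of_le (by simp)
  refine ⟨?_, ?_, ?_, ?_⟩
  · funext v
    show fderiv ℝ (Rop n) v (Rop m v) - fderiv ℝ (Rop m) v (Rop n v) = _
    rw [fderiv_Rop n hn' v (Rop m v), fderiv_Rop m hm' v (Rop n v)]
    simp only [Rop, Zop]
    ext <;> simp [Prod.ext_iff, Finset.sum_sub_distrib, mul_comm] <;> ring
  · funext v
    show fderiv ℝ (Rop m) v (Dt v) - fderiv ℝ Dt v (Rop m v) = _
    rw [fderiv_Dt, fderiv_Rop m hm' v (Dt v)]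
    simp only [Dt, Rop]
    ext <;> simp
  · funext v
    show fderiv ℝ (Zop χ) v (Dt v) - fderiv ℝ Dt v (Zop χ v) = _
    rw [fderiv_Dt, fderiv_Zop χ hχ' v (Dt v)]
    simp only [Dt, Zop]
    ext <;> simp
  · funext v
    show fderiv ℝ (Rop m) v (Zop χ v) - fderiv ℝ (Zop χ) v (Rop m v) = _
    rw [fderiv_Rop m hm' v (Zop χ v), fderiv_Zop χ hχ' v (Rop m v)]
    simp only [Zop, Rop]
    ext <;> simp
end

section
/- Let N ≥ 1 and let χ be a C^N function on an open interval (t₀, t₁) ⊆ ℝ. Then there exists a C^N function η on (t₀, t₁) such that 2t·η'(t) + 2η(t) = χ(t) for all t in (t₀, t₁). (Note this holds even when 0 ∈ (t₀,t₁), where the ODE is singular.) -/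
/-!
Away from `0` the equation reads `(2 t η)' = χ`, so `η t = (2 t)⁻¹ ∫_c^t χ` solves it on any
interval avoiding `0`. When `0` lies in the interval take `c = 0`; the substitution `y = s t`
turns this into `η t = ½ ∫₀¹ χ (s t) ds`, which also satisfies the equation at `t = 0`, where it
reads `2 η 0 = χ 0`. Its `C^N` regularity follows by induction on `N` from differentiation under
the integral sign, `d/dt ∫₀¹ sᵏ g (s t) ds = ∫₀¹ sᵏ⁺¹ g' (s t) ds`, which is dominated because
the segments from `0` to the points near `t` fill a compact subset of the domain.
-/

open Set Filter Topology MeasureTheory intervalIntegral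

section RadialMoment

variable {E : Type*} [NormedAddCommGroup E] {U : Set ℝ} {g : ℝ → E}

lemma exists_ball_bound_comp_mul (hUo : IsOpen U) (hU : StarConvex ℝ 0 U)
    (hg : ContinuousOn g U) {t : ℝ} (ht : t ∈ U) :
    ∃ ε > 0, Metric.ball t ε ⊆ U ∧ ∃ C, ∀ x ∈ Metric.ball t ε, ∀ s ∈ Icc (0 : ℝ) 1,
      ‖g (s * x)‖ ≤ C := by
  obtain ⟨ε, hε, hεU⟩ := Metric.nhds_basis_closedBall.mem_iff.1 (hUo.mem_nhds ht)
  have hK : MapsTo (fun p : ℝ × ℝ => p.1 * p.2) (Icc 0 1 ×ˢ Metric.closedBall t ε) U :=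
    fun p hp => hU.smul_mem (hεU hp.2) hp.1.1 hp.1.2
  obtain ⟨C, hC⟩ := (isCompact_Icc.prod (isCompact_closedBall t ε)).exists_bound_of_continuousOn
    (hg.comp (continuousOn_fst.mul continuousOn_snd) hK)
  exact ⟨ε, hε, Metric.ball_subset_closedBall.trans hεU, C, fun x hx s hs =>
    hC (s, x) ⟨hs, Metric.ball_subset_closedBall hx⟩⟩

variable [NormedSpace ℝ E]

noncomputable def radialMoment (k : ℕ) (g : ℝ → E) (t : ℝ) : E :=
  ∫ s in (0 : ℝ)..1, s ^ k • g (s * t)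

lemma norm_pow_smul_le {s : ℝ} (hs : s ∈ Icc (0 : ℝ) 1) (k : ℕ) (v : E) :
    ‖s ^ k • v‖ ≤ ‖v‖ := by
  rw [norm_smul, norm_pow, Real.norm_of_nonneg hs.1]
  exact mul_le_of_le_one_left (norm_nonneg v) (pow_le_one₀ hs.1 hs.2)

lemma continuousOn_pow_smul_comp_mul (hU : StarConvex ℝ 0 U) (hg : ContinuousOn g U)
    {x : ℝ} (hx : x ∈ U) (k : ℕ) :
    ContinuousOn (fun s : ℝ => s ^ k • g (s * x)) (Icc 0 1) :=
  (continuousOn_pow k).smul <| hg.comp (continuousOn_id.mul continuousOn_const)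
    fun _ hs => hU.smul_mem hx hs.1 hs.2

lemma aestronglyMeasurable_pow_smul_comp_mul (hU : StarConvex ℝ 0 U) (hg : ContinuousOn g U)
    {x : ℝ} (hx : x ∈ U) (k : ℕ) :
    AEStronglyMeasurable (fun s : ℝ => s ^ k • g (s * x)) (volume.restrict (uIoc 0 1)) := by
  rw [uIoc_of_le zero_le_one]
  exact ((continuousOn_pow_smul_comp_mul hU hg hx k).mono Ioc_subset_Icc_self)
    |>.aestronglyMeasurable measurableSet_Ioc

lemma continuousOn_radialMoment (hUo : IsOpen U) (hU : StarConvex ℝ 0 U)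
    (hg : ContinuousOn g U) (k : ℕ) : ContinuousOn (radialMoment k g) U := by
  intro t ht
  obtain ⟨ε, hε, hεU, C, hC⟩ := exists_ball_bound_comp_mul hUo hU hg ht
  have hball : Metric.ball t ε ∈ 𝓝 t := Metric.ball_mem_nhds t hε
  refine (continuousAt_of_dominated_interval (bound := fun _ => C) ?_ ?_
    intervalIntegrable_const ?_).continuousWithinAt
  · filter_upwards [hball] with x hx
    exact aestronglyMeasurable_pow_smul_comp_mul hU hg (hεU hx) k
  · filter_upwards [hball] with x hx
    refine ae_of_all _ fun s hs => ?_
    rw [uIoc_of_le zero_le_one] at hs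
    have hs' : s ∈ Icc (0 : ℝ) 1 := Ioc_subset_Icc_self hs
    exact (norm_pow_smul_le hs' k _).trans (hC x hx s hs')
  · refine ae_of_all _ fun s hs => ?_
    rw [uIoc_of_le zero_le_one] at hs
    have hst : s * t ∈ U := hU.smul_mem ht hs.1.le hs.2
    exact continuousAt_const.smul <|
      (hg.continuousAt (hUo.mem_nhds hst)).comp (continuous_const_mul s).continuousAt

lemma hasDerivAt_radialMoment (hUo : IsOpen U) (hU : StarConvex ℝ 0 U)
    (hg : ContDiffOn ℝ 1 g U) (k : ℕ) {t : ℝ} (ht : t ∈ U) :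
    HasDerivAt (radialMoment k g) (radialMoment (k + 1) (deriv g) t) t := by
  have hg' : ContinuousOn (deriv g) U := hg.continuousOn_deriv_of_isOpen hUo le_rfl
  obtain ⟨ε, hε, hεU, C, hC⟩ := exists_ball_bound_comp_mul hUo hU hg' ht
  have hball : Metric.ball t ε ∈ 𝓝 t := Metric.ball_mem_nhds t hε
  refine (hasDerivAt_integral_of_dominated_loc_of_deriv_le
    (F := fun x s => s ^ k • g (s * x)) (F' := fun x s => s ^ (k + 1) • deriv g (s * x))
    (bound := fun _ => C) hball ?_ ?_ (aestronglyMeasurable_pow_smul_comp_mul hU hg' ht _) ?_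
    intervalIntegrable_const ?_).2
  · filter_upwards [hball] with x hx
    exact aestronglyMeasurable_pow_smul_comp_mul hU hg.continuousOn (hεU hx) k
  · exact (continuousOn_pow_smul_comp_mul hU hg.continuousOn ht k).intervalIntegrable_of_Icc
      zero_le_one
  · refine ae_of_all _ fun s hs x hx => ?_
    rw [uIoc_of_le zero_le_one] at hs
    have hs' : s ∈ Icc (0 : ℝ) 1 := Ioc_subset_Icc_self hs
    exact (norm_pow_smul_le hs' _ _).trans (hC x hx s hs')
  · refine ae_of_all _ fun s hs x hx => ?_
    rw [uIoc_of_le zero_le_one] at hs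
    have hsx : s * x ∈ U := hU.smul_mem (hεU hx) hs.1.le hs.2
    have hgd : HasDerivAt g (deriv g (s * x)) (s * x) :=
      ((hg.contDiffAt (hUo.mem_nhds hsx)).differentiableAt one_ne_zero).hasDerivAt
    rw [pow_succ, mul_smul]
    exact (hgd.scomp x (hasDerivAt_const_mul s)).const_smul (s ^ k)

lemma contDiffOn_radialMoment (hUo : IsOpen U) (hU : StarConvex ℝ 0 U) {n : ℕ}
    (hg : ContDiffOn ℝ n g U) (k : ℕ) : ContDiffOn ℝ n (radialMoment k g) U := by
  induction n generalizing k g with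
  | zero => exact contDiffOn_zero.2 (continuousOn_radialMoment hUo hU hg.continuousOn k)
  | succ n ih =>
    have hg1 : ContDiffOn ℝ 1 g U := hg.of_le (by exact_mod_cast n.succ_pos)
    have hderiv := fun t (ht : t ∈ U) => hasDerivAt_radialMoment hUo hU hg1 k ht
    push_cast at hg ⊢
    refine (contDiffOn_succ_iff_deriv_of_isOpen hUo).2
      ⟨fun t ht => (hderiv t ht).differentiableAt.differentiableWithinAt, by simp, ?_⟩
    exact (ih (hg.deriv_of_isOpen hUo le_rfl) (k + 1)).congr fun t ht => (hderiv t ht).deriv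

lemma radialMoment_zero_eq_smul_integral (g : ℝ → E) {x : ℝ} (hx : x ≠ 0) :
    radialMoment 0 g x = x⁻¹ • ∫ y in (0 : ℝ)..x, g y := by
  simp only [radialMoment, pow_zero, one_smul]
  rw [integral_comp_mul_right g hx, zero_mul, one_mul]

end RadialMoment

section Primitive

variable {E : Type*} [NormedAddCommGroup E] [NormedSpace ℝ E] [CompleteSpace E]
  {U : Set ℝ} {χ : ℝ → E}

lemma hasDerivAt_integral_of_continuousOn (hUo : IsOpen U) (hχ : ContinuousOn χ U) {c t : ℝ}
    (hct : uIcc c t ⊆ U) : HasDerivAt (fun x => ∫ y in c..x, χ y) (χ t) t :=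
  have ht : t ∈ U := hct right_mem_uIcc
  integral_hasDerivAt_right (hχ.mono hct).intervalIntegrable
    (hχ.stronglyMeasurableAtFilter hUo t ht) (hχ.continuousAt (hUo.mem_nhds ht))

lemma contDiffOn_integral_of_ordConnected (hUo : IsOpen U) (hU : U.OrdConnected) {c : ℝ}
    (hc : c ∈ U) {n : ℕ} (hχ : ContDiffOn ℝ n χ U) :
    ContDiffOn ℝ (n + 1) (fun x => ∫ y in c..x, χ y) U := by
  have hF := fun t (ht : t ∈ U) =>
    hasDerivAt_integral_of_continuousOn hUo hχ.continuousOn (hU.uIcc_subset hc ht)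
  exact (contDiffOn_succ_iff_deriv_of_isOpen hUo).2
    ⟨fun t ht => (hF t ht).differentiableAt.differentiableWithinAt, by simp,
      hχ.congr fun t ht => (hF t ht).deriv⟩

end Primitive

section SingularODE

variable {U : Set ℝ} {χ : ℝ → ℝ}

lemma two_mul_deriv_add_two_mul_eq {η F : ℝ → ℝ} {t c : ℝ} (ht : t ≠ 0)
    (hF : HasDerivAt F c t) (hη : η =ᶠ[𝓝 t] fun x => F x / (2 * x)) :
    2 * t * deriv η t + 2 * η t = c := by
  have h2t : 2 * t ≠ 0 := mul_ne_zero two_ne_zero ht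
  have hd : HasDerivAt (fun x => F x / (2 * x)) _ t := hF.div (hasDerivAt_const_mul 2) h2t
  rw [hη.deriv_eq, hd.deriv, hη.eq_of_nhds]
  field_simp
  ring

theorem exists_contDiffOn_solution_of_starConvex (hUo : IsOpen U) (hU : StarConvex ℝ 0 U)
    {n : ℕ} (hχ : ContDiffOn ℝ n χ U) :
    ∃ η : ℝ → ℝ, ContDiffOn ℝ n η U ∧ ∀ t ∈ U, 2 * t * deriv η t + 2 * η t = χ t := by
  refine ⟨fun t => radialMoment 0 χ t / 2,
    (contDiffOn_radialMoment hUo hU hχ 0).div_const 2, fun t ht => ?_⟩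
  rcases eq_or_ne t 0 with rfl | ht0
  · simp [radialMoment, mul_div_cancel₀]
  refine two_mul_deriv_add_two_mul_eq ht0
    (hasDerivAt_integral_of_continuousOn hUo hχ.continuousOn
      (segment_eq_uIcc (0 : ℝ) t ▸ hU.segment_subset ht)) ?_
  filter_upwards [isOpen_ne.mem_nhds ht0] with x hx
  rw [radialMoment_zero_eq_smul_integral χ hx, smul_eq_mul]
  field_simp

theorem exists_contDiffOn_solution_of_zero_notMem (hUo : IsOpen U) (hU : U.OrdConnected)
    (h0 : (0 : ℝ) ∉ U) {n : ℕ} (hχ : ContDiffOn ℝ n χ U) :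
    ∃ η : ℝ → ℝ, ContDiffOn ℝ n η U ∧ ∀ t ∈ U, 2 * t * deriv η t + 2 * η t = χ t := by
  rcases U.eq_empty_or_nonempty with rfl | ⟨c, hc⟩
  · exact ⟨0, contDiffOn_empty, by simp⟩
  have hne : ∀ t ∈ U, t ≠ 0 := fun t ht h => h0 (h ▸ ht)
  refine ⟨fun x => (∫ y in c..x, χ y) / (2 * x), ?_, fun t ht => ?_⟩
  · exact ((contDiffOn_integral_of_ordConnected hUo hU hc hχ).of_le le_self_add).div
      (contDiffOn_const.mul contDiffOn_id) fun x hx => mul_ne_zero two_ne_zero (hne x hx)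
  · exact two_mul_deriv_add_two_mul_eq (hne t ht)
      (hasDerivAt_integral_of_continuousOn hUo hχ.continuousOn (hU.uIcc_subset hc ht))
      EventuallyEq.rfl

end SingularODE

theorem singular_ode_solvability_A_general (N : ℕ) (t₀ t₁ : ℝ) (χ : ℝ → ℝ)
    (hχ : ContDiffOn ℝ N χ (Set.Ioo t₀ t₁)) :
    ∃ η : ℝ → ℝ, ContDiffOn ℝ N η (Set.Ioo t₀ t₁) ∧
      ∀ t ∈ Set.Ioo t₀ t₁, 2 * t * deriv η t + 2 * η t = χ t := by
  by_cases h0 : (0 : ℝ) ∈ Ioo t₀ t₁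
  · exact exists_contDiffOn_solution_of_starConvex isOpen_Ioo
      ((convex_Ioo t₀ t₁).starConvex h0) hχ
  · exact exists_contDiffOn_solution_of_zero_notMem isOpen_Ioo ordConnected_Ioo h0 hχ

theorem singular_ode_solvability_A (N : ℕ) (hN : 1 ≤ N) (t₀ t₁ : ℝ) (χ : ℝ → ℝ)
    (hχ : ContDiffOn ℝ N χ (Set.Ioo t₀ t₁)) :
    ∃ η : ℝ → ℝ, ContDiffOn ℝ N η (Set.Ioo t₀ t₁) ∧
      ∀ t ∈ Set.Ioo t₀ t₁, 2 * t * deriv η t + 2 * η t = χ t :=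
  singular_ode_solvability_A_general N t₀ t₁ χ hχ
end

section
/- Let N ≥ 1, let m¹, m² be C^N functions on an open interval (t₀, t₁) ⊆ ℝ, and let a ∈ ℝ. Then there exist C^N functions l¹, l² on (t₀, t₁) such that 2t·(l¹)'(t) − l¹(t) + a·l²(t) = m¹(t) and 2t·(l²)'(t) − l²(t) − a·l¹(t) = m²(t) for all t ∈ (t₀, t₁). -/
/-!
Writing `L = l₁ + i l₂`, `M = m₁ + i m₂` and `μ = 1 + i a`, the system is the single complex
equation `2 t L' - μ L = M`. On an interval avoiding `0` it is a regular linear equation, solved by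
variation of constants with the homogeneous solution `|t| ^ (μ / 2)`. If the interval contains `0`,
the solution that stays smooth there is
  `L t = ∫₀¹ v ^ (-1 - μ) (M (t v²) - M 0) dv - M 0 / μ`,
whose integrand is bounded because `M (t v²) - M 0 = O(v²)` and `Re μ ≤ 1`. Differentiating under
the integral sign gives `L' t = ∫₀¹ v ^ (1 - μ) M' (t v²) dv`, an integral of the same shape with
`Re (1 - μ) ≥ 0`; such integrals are as smooth as their integrand, so `L` is `C^N`, and an
integration by parts in `v` turns `2 t L' - μ L` into `M`.
-/

open Set Filter Topology MeasureTheory intervalIntegral Complex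

section Calculus

variable {𝕜 E : Type*} [NontriviallyNormedField 𝕜] [NormedAddCommGroup E] [NormedSpace 𝕜 E]
  {s : Set 𝕜} {f f' : 𝕜 → E}

theorem contDiffOn_succ_of_hasDerivAt {n : ℕ} (hs : IsOpen s)
    (hf : ∀ x ∈ s, HasDerivAt f (f' x) x) (hf' : ContDiffOn 𝕜 n f' s) :
    ContDiffOn 𝕜 (n + 1 : ℕ) f s := by
  rw [Nat.cast_succ, contDiffOn_succ_iff_deriv_of_isOpen hs]
  exact ⟨fun x hx => (hf x hx).differentiableAt.differentiableWithinAt, by simp,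
    hf'.congr fun x hx => (hf x hx).deriv⟩

theorem ContDiffOn.hasDerivAt_deriv {n : WithTop ℕ∞} (hf : ContDiffOn 𝕜 n f s) (hs : IsOpen s)
    (hn : n ≠ 0) {x : 𝕜} (hx : x ∈ s) : HasDerivAt f (deriv f x) x :=
  ((hf.differentiableOn hn x hx).differentiableAt (hs.mem_nhds hx)).hasDerivAt

end Calculus

theorem hasDerivAt_integral_of_continuousOn_s7 {E : Type*} [NormedAddCommGroup E] [NormedSpace ℝ E]
    [CompleteSpace E] {s : Set ℝ} (hs : IsOpen s) (hs' : s.OrdConnected) {f : ℝ → E}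
    (hf : ContinuousOn f s) {c t : ℝ} (hc : c ∈ s) (ht : t ∈ s) :
    HasDerivAt (fun u => ∫ x in c..u, f x) (f t) t :=
  integral_hasDerivAt_right ((hf.mono (hs'.uIcc_subset hc ht)).intervalIntegrable)
    (hf.stronglyMeasurableAtFilter hs t ht) (hf.continuousAt (hs.mem_nhds ht))

theorem intervalIntegrable_of_continuousOn_Ioc_of_norm_le {E : Type*} [NormedAddCommGroup E]
    {f : ℝ → E} {a b C : ℝ} (hab : a ≤ b) (hf : ContinuousOn f (Ioc a b))
    (hC : ∀ v ∈ Ioc a b, ‖f v‖ ≤ C) : IntervalIntegrable f volume a b := by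
  rw [intervalIntegrable_iff_integrableOn_Ioc_of_le hab]
  exact IntegrableOn.of_bound measure_Ioc_lt_top (hf.aestronglyMeasurable measurableSet_Ioc) C
    ((ae_restrict_iff' measurableSet_Ioc).2 (.of_forall hC))

theorem hasDerivAt_ofReal_cpow_add_one {x : ℝ} (hx : x ≠ 0) (r : ℂ) :
    HasDerivAt (fun y : ℝ => (y : ℂ) ^ (r + 1)) ((r + 1) * x ^ r) x := by
  rcases eq_or_ne (r + 1) 0 with hr | hr
  · simpa [hr] using hasDerivAt_const x (1 : ℂ)
  · simpa using hasDerivAt_ofReal_cpow_const hx hr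

theorem ofReal_cpow_add_two (c : ℂ) {v : ℝ} (hv : 0 < v) :
    (v : ℂ) ^ (c + 2) = (v : ℂ) ^ c * (v ^ 2 : ℝ) := by
  rw [cpow_add _ _ (ofReal_ne_zero.2 hv.ne'), cpow_ofNat]
  norm_cast

theorem hasDerivAt_ofReal_cpow_add_one_mul_comp {M M' : ℝ → ℂ} {x v : ℝ} (hv : 0 < v) (c : ℂ)
    (hM : HasDerivAt M (M' (x * v ^ 2)) (x * v ^ 2)) :
    HasDerivAt (fun v : ℝ => (v : ℂ) ^ (c + 1) * M (x * v ^ 2))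
      ((c + 1) * ((v : ℂ) ^ c * M (x * v ^ 2)) +
        2 * x * ((v : ℂ) ^ (c + 2) * M' (x * v ^ 2))) v := by
  have hinner : HasDerivAt (fun v : ℝ => x * v ^ 2) (x * (2 * v)) v := by
    simpa using (hasDerivAt_pow 2 v).const_mul x
  refine ((hasDerivAt_ofReal_cpow_add_one hv.ne' c).mul (hM.scomp v hinner)).congr_deriv ?_
  rw [real_smul, ofReal_cpow_add_two c hv, cpow_add _ _ (ofReal_ne_zero.2 hv.ne'), cpow_one,
    Function.comp_apply]
  push_cast
  ring

theorem norm_ofReal_cpow_le_one {c : ℂ} (hc : 0 ≤ c.re) {v : ℝ} (hv : v ∈ Ioc 0 1) :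
    ‖(v : ℂ) ^ c‖ ≤ 1 := by
  rw [norm_cpow_eq_rpow_re_of_pos hv.1]
  exact Real.rpow_le_one hv.1.le hv.2 hc

theorem Set.OrdConnected.mul_sq_mem {s : Set ℝ} (hs : s.OrdConnected) {x v : ℝ} (h0 : 0 ∈ s)
    (hx : x ∈ s) (hv : v ^ 2 ≤ 1) : x * v ^ 2 ∈ s := by
  refine hs.uIcc_subset h0 hx ?_
  have hv0 := sq_nonneg v
  rw [mem_uIcc]
  rcases le_total 0 x with h | h
  · exact .inl ⟨by positivity, by nlinarith⟩
  · exact .inr ⟨by nlinarith, by nlinarith⟩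

theorem exists_Icc_mem_nhds_subset_Ioo {t₀ t₁ x : ℝ} (h0 : (0 : ℝ) ∈ Ioo t₀ t₁)
    (hx : x ∈ Ioo t₀ t₁) :
    ∃ a b, (0 : ℝ) ∈ Icc a b ∧ Icc a b ∈ 𝓝 x ∧ Icc a b ⊆ Ioo t₀ t₁ := by
  obtain ⟨a, hta, ha⟩ := exists_between (lt_min h0.1 hx.1)
  obtain ⟨b, hb, hbt⟩ := exists_between (max_lt h0.2 hx.2)
  rw [lt_min_iff] at ha
  rw [max_lt_iff] at hb
  exact ⟨a, b, ⟨ha.1.le, hb.1.le⟩, Icc_mem_nhds ha.2 hb.2, Icc_subset_Ioo hta hbt⟩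

noncomputable def eulerIntegral (c : ℂ) (M : ℝ → ℂ) (t : ℝ) : ℂ :=
  ∫ v in (0 : ℝ)..1, (v : ℂ) ^ c * M (t * v ^ 2)

section EulerIntegral

variable {t₀ t₁ : ℝ} {c : ℂ} {M M' : ℝ → ℂ}

theorem continuousOn_ofReal_cpow_mul_comp {s : Set ℝ} (hM : ContinuousOn M s) {x : ℝ}
    (hx : ∀ v ∈ Ioc (0 : ℝ) 1, x * v ^ 2 ∈ s) :
    ContinuousOn (fun v : ℝ => (v : ℂ) ^ c * M (x * v ^ 2)) (Ioc 0 1) :=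
  ContinuousOn.mul (f := fun v : ℝ => (v : ℂ) ^ c)
    (fun v hv => (continuousAt_ofReal_cpow_const v c (Or.inr hv.1.ne')).continuousWithinAt)
    (hM.comp (by fun_prop) hx)

theorem norm_ofReal_cpow_mul_le {v : ℝ} (hv : v ∈ Ioc (0 : ℝ) 1) (hc : 0 ≤ c.re) {z : ℂ} {C : ℝ}
    (hz : ‖z‖ ≤ C) : ‖(v : ℂ) ^ c * z‖ ≤ C := by
  rw [norm_mul]
  exact (mul_le_of_le_one_left (norm_nonneg _) (norm_ofReal_cpow_le_one hc hv)).trans hz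

theorem intervalIntegrable_ofReal_cpow_mul_comp (h0 : (0 : ℝ) ∈ Ioo t₀ t₁) (hc : 0 ≤ c.re)
    (hM : ContinuousOn M (Ioo t₀ t₁)) {x : ℝ} (hx : x ∈ Ioo t₀ t₁) :
    IntervalIntegrable (fun v : ℝ => (v : ℂ) ^ c * M (x * v ^ 2)) volume 0 1 := by
  obtain ⟨a, b, hK0, hK, hKs⟩ := exists_Icc_mem_nhds_subset_Ioo h0 hx
  have hmaps : ∀ v ∈ Ioc (0 : ℝ) 1, x * v ^ 2 ∈ Icc a b := fun v hv =>
    ordConnected_Icc.mul_sq_mem hK0 (mem_of_mem_nhds hK) (pow_le_one₀ hv.1.le hv.2)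
  obtain ⟨C, hC⟩ := isCompact_Icc.exists_bound_of_continuousOn (hM.mono hKs)
  exact intervalIntegrable_of_continuousOn_Ioc_of_norm_le zero_le_one
    (continuousOn_ofReal_cpow_mul_comp (hM.mono hKs) hmaps) fun v hv =>
      norm_ofReal_cpow_mul_le hv hc (hC _ (hmaps v hv))

theorem continuousOn_eulerIntegral (h0 : (0 : ℝ) ∈ Ioo t₀ t₁) (hc : 0 ≤ c.re)
    (hM : ContinuousOn M (Ioo t₀ t₁)) : ContinuousOn (eulerIntegral c M) (Ioo t₀ t₁) := by
  intro x₀ hx₀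
  obtain ⟨a, b, hK0, hK, hKs⟩ := exists_Icc_mem_nhds_subset_Ioo h0 hx₀
  have hmaps : ∀ x ∈ Icc a b, ∀ v ∈ Ioc (0 : ℝ) 1, x * v ^ 2 ∈ Icc a b := fun x hx v hv =>
    ordConnected_Icc.mul_sq_mem hK0 hx (pow_le_one₀ hv.1.le hv.2)
  obtain ⟨C, hC⟩ := isCompact_Icc.exists_bound_of_continuousOn (hM.mono hKs)
  refine (continuousAt_of_dominated_interval (bound := fun _ => C) ?_ ?_
    intervalIntegrable_const ?_).continuousWithinAt
  · filter_upwards [hK] with x hx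
    rw [uIoc_of_le zero_le_one]
    exact (continuousOn_ofReal_cpow_mul_comp (hM.mono hKs) (hmaps x hx)).aestronglyMeasurable
      measurableSet_Ioc
  · filter_upwards [hK] with x hx
    refine .of_forall fun v hv => ?_
    rw [uIoc_of_le zero_le_one] at hv
    exact norm_ofReal_cpow_mul_le hv hc (hC _ (hmaps x hx v hv))
  · refine .of_forall fun v hv => ?_
    rw [uIoc_of_le zero_le_one] at hv
    have hMx := hM.continuousAt (isOpen_Ioo.mem_nhds (hKs (hmaps x₀ (mem_of_mem_nhds hK) v hv)))
    exact continuousAt_const.mul (hMx.comp (f := fun x => x * v ^ 2) (by fun_prop))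

theorem hasDerivAt_eulerIntegral (h0 : (0 : ℝ) ∈ Ioo t₀ t₁) (hc : -2 ≤ c.re)
    (hM : ∀ t ∈ Ioo t₀ t₁, HasDerivAt M (M' t) t) (hM' : ContinuousOn M' (Ioo t₀ t₁))
    {x₀ : ℝ} (hx₀ : x₀ ∈ Ioo t₀ t₁)
    (hint : IntervalIntegrable (fun v : ℝ => (v : ℂ) ^ c * M (x₀ * v ^ 2)) volume 0 1) :
    HasDerivAt (eulerIntegral c M) (eulerIntegral (c + 2) M' x₀) x₀ := by
  obtain ⟨a, b, hK0, hK, hKs⟩ := exists_Icc_mem_nhds_subset_Ioo h0 hx₀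
  have hmaps : ∀ x ∈ Icc a b, ∀ v ∈ Ioc (0 : ℝ) 1, x * v ^ 2 ∈ Icc a b := fun x hx v hv =>
    ordConnected_Icc.mul_sq_mem hK0 hx (pow_le_one₀ hv.1.le hv.2)
  have hMc : ContinuousOn M (Icc a b) := fun t ht =>
    (hM t (hKs ht)).continuousAt.continuousWithinAt
  obtain ⟨C, hC⟩ := isCompact_Icc.exists_bound_of_continuousOn (hM'.mono hKs)
  have hc2 : 0 ≤ (c + 2).re := by simp only [add_re, re_ofNat]; linarith
  refine (hasDerivAt_integral_of_dominated_loc_of_deriv_le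
    (F := fun x v => (v : ℂ) ^ c * M (x * v ^ 2))
    (F' := fun x v => (v : ℂ) ^ (c + 2) * M' (x * v ^ 2))
    (bound := fun _ => C) hK ?_ hint ?_ ?_ intervalIntegrable_const ?_).2
  · filter_upwards [hK] with x hx
    rw [uIoc_of_le zero_le_one]
    exact (continuousOn_ofReal_cpow_mul_comp hMc (hmaps x hx)).aestronglyMeasurable
      measurableSet_Ioc
  · rw [uIoc_of_le zero_le_one]
    exact (continuousOn_ofReal_cpow_mul_comp (hM'.mono hKs) (hmaps x₀ (mem_of_mem_nhds hK))
      ).aestronglyMeasurable measurableSet_Ioc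
  · refine .of_forall fun v hv x hx => ?_
    rw [uIoc_of_le zero_le_one] at hv
    exact norm_ofReal_cpow_mul_le hv hc2 (hC _ (hmaps x hx v hv))
  · refine .of_forall fun v hv x hx => ?_
    rw [uIoc_of_le zero_le_one] at hv
    have hcomp : HasDerivAt (fun x : ℝ => M (x * v ^ 2)) ((v ^ 2 : ℝ) • M' (x * v ^ 2)) x :=
      (hM _ (hKs (hmaps x hx v hv))).scomp x (hasDerivAt_mul_const _)
    rw [ofReal_cpow_add_two c hv.1, mul_assoc, ← real_smul]
    exact hcomp.const_mul _

theorem contDiffOn_eulerIntegral (h0 : (0 : ℝ) ∈ Ioo t₀ t₁) {n : ℕ} (hc : 0 ≤ c.re)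
    (hM : ContDiffOn ℝ n M (Ioo t₀ t₁)) : ContDiffOn ℝ n (eulerIntegral c M) (Ioo t₀ t₁) := by
  induction n generalizing c M with
  | zero =>
    rw [Nat.cast_zero, contDiffOn_zero] at hM ⊢
    exact continuousOn_eulerIntegral h0 hc hM
  | succ n ih =>
    have hM' : ContDiffOn ℝ n (deriv M) (Ioo t₀ t₁) := hM.deriv_of_isOpen isOpen_Ioo (by simp)
    have hMd : ∀ t ∈ Ioo t₀ t₁, HasDerivAt M (deriv M t) t := fun t ht =>
      hM.hasDerivAt_deriv isOpen_Ioo (by simp) ht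
    have hc2 : 0 ≤ (c + 2).re := by simp only [add_re, re_ofNat]; linarith
    refine contDiffOn_succ_of_hasDerivAt isOpen_Ioo (fun x hx => ?_) (ih hc2 hM')
    exact hasDerivAt_eulerIntegral h0 (by linarith) hMd hM'.continuousOn hx
      (intervalIntegrable_ofReal_cpow_mul_comp h0 hc hM.continuousOn hx)

theorem exists_norm_comp_mul_sq_le (h0 : (0 : ℝ) ∈ Ioo t₀ t₁) (hM0 : M 0 = 0)
    (hM : ∀ t ∈ Ioo t₀ t₁, HasDerivAt M (M' t) t) (hM' : ContinuousOn M' (Ioo t₀ t₁))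
    {x : ℝ} (hx : x ∈ Ioo t₀ t₁) : ∃ C, ∀ v ∈ Ioc (0 : ℝ) 1, ‖M (x * v ^ 2)‖ ≤ C * v ^ 2 := by
  obtain ⟨a, b, hK0, hK, hKs⟩ := exists_Icc_mem_nhds_subset_Ioo h0 hx
  obtain ⟨C, hC⟩ := isCompact_Icc.exists_bound_of_continuousOn (hM'.mono hKs)
  refine ⟨C * |x|, fun v hv => ?_⟩
  have hlip := (convex_Icc a b).norm_image_sub_le_of_norm_hasDerivWithin_le
    (fun t ht => (hM t (hKs ht)).hasDerivWithinAt) hC hK0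
    (ordConnected_Icc.mul_sq_mem hK0 (mem_of_mem_nhds hK) (pow_le_one₀ hv.1.le hv.2))
  simpa [hM0, abs_mul, mul_assoc] using hlip

theorem norm_ofReal_cpow_mul_le_of_le_mul_sq {v : ℝ} (hv : v ∈ Ioc (0 : ℝ) 1) (hc : -2 ≤ c.re)
    {z : ℂ} {C : ℝ} (hz : ‖z‖ ≤ C * v ^ 2) : ‖(v : ℂ) ^ c * z‖ ≤ C := by
  have hc2 : 0 ≤ (c + 2).re := by simp only [add_re, re_ofNat]; linarith
  calc ‖(v : ℂ) ^ c * z‖ ≤ ‖(v : ℂ) ^ c‖ * (C * v ^ 2) := by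
        rw [norm_mul]; gcongr
    _ = C * ‖(v : ℂ) ^ (c + 2)‖ := by
        rw [ofReal_cpow_add_two c hv.1, norm_mul, norm_real, Real.norm_of_nonneg (by positivity)]
        ring
    _ ≤ C := by
        have hC : 0 ≤ C := nonneg_of_mul_nonneg_left ((norm_nonneg z).trans hz) (pow_pos hv.1 2)
        exact mul_le_of_le_one_right hC (norm_ofReal_cpow_le_one hc2 hv)

theorem intervalIntegrable_ofReal_cpow_mul_comp_of_eq_zero (h0 : (0 : ℝ) ∈ Ioo t₀ t₁)
    (hc : -2 ≤ c.re) (hM0 : M 0 = 0) (hM : ∀ t ∈ Ioo t₀ t₁, HasDerivAt M (M' t) t)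
    (hM' : ContinuousOn M' (Ioo t₀ t₁)) {x : ℝ} (hx : x ∈ Ioo t₀ t₁) :
    IntervalIntegrable (fun v : ℝ => (v : ℂ) ^ c * M (x * v ^ 2)) volume 0 1 := by
  obtain ⟨C, hC⟩ := exists_norm_comp_mul_sq_le h0 hM0 hM hM' hx
  exact intervalIntegrable_of_continuousOn_Ioc_of_norm_le zero_le_one
    (continuousOn_ofReal_cpow_mul_comp (fun t ht => (hM t ht).continuousAt.continuousWithinAt)
    fun v hv => ordConnected_Ioo.mul_sq_mem h0 hx (pow_le_one₀ hv.1.le hv.2))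
    fun v hv => norm_ofReal_cpow_mul_le_of_le_mul_sq hv hc (hC v hv)

theorem two_mul_eulerIntegral_deriv_add_mul_eulerIntegral (h0 : (0 : ℝ) ∈ Ioo t₀ t₁)
    (hc : -2 ≤ c.re) (hM0 : M 0 = 0) (hM : ∀ t ∈ Ioo t₀ t₁, HasDerivAt M (M' t) t)
    (hM' : ContinuousOn M' (Ioo t₀ t₁)) {x : ℝ} (hx : x ∈ Ioo t₀ t₁) :
    2 * x * eulerIntegral (c + 2) M' x + (c + 1) * eulerIntegral c M x = M x := by
  have hmaps : ∀ v ∈ Icc (0 : ℝ) 1, x * v ^ 2 ∈ Ioo t₀ t₁ := fun v hv =>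
    ordConnected_Ioo.mul_sq_mem h0 hx (pow_le_one₀ hv.1 hv.2)
  set f : ℝ → ℂ := fun v => (v : ℂ) ^ (c + 1) * M (x * v ^ 2)
  have hderiv : ∀ v ∈ Ioo (0 : ℝ) 1, HasDerivAt f ((c + 1) * ((v : ℂ) ^ c * M (x * v ^ 2)) +
      2 * x * ((v : ℂ) ^ (c + 2) * M' (x * v ^ 2))) v := fun v hv =>
    hasDerivAt_ofReal_cpow_add_one_mul_comp hv.1 c (hM _ (hmaps v (Ioo_subset_Icc_self hv)))
  have hint₁ := intervalIntegrable_ofReal_cpow_mul_comp_of_eq_zero h0 hc hM0 hM hM' hx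
  have hint₂ := intervalIntegrable_ofReal_cpow_mul_comp h0 (c := c + 2)
    (by simp only [add_re, re_ofNat]; linarith) hM' hx
  have hlim₀ : Tendsto f (𝓝[>] 0) (𝓝 0) := by
    obtain ⟨C, hC⟩ := exists_norm_comp_mul_sq_le h0 hM0 hM hM' hx
    refine squeeze_zero_norm' (a := fun v => v * C) ?_ ?_
    · filter_upwards [Ioc_mem_nhdsGT zero_lt_one] with v hv
      simp only [f]
      rw [cpow_add _ _ (ofReal_ne_zero.2 hv.1.ne'), cpow_one, mul_comm _ (v : ℂ), mul_assoc,
        norm_mul, norm_real, Real.norm_of_nonneg hv.1.le]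
      exact mul_le_mul_of_nonneg_left (norm_ofReal_cpow_mul_le_of_le_mul_sq hv hc (hC v hv))
        hv.1.le
    · exact tendsto_nhdsWithin_of_tendsto_nhds (by simpa using (continuous_mul_const C).tendsto 0)
  have hlim₁ : Tendsto f (𝓝[<] 1) (𝓝 (M x)) := by
    have hM1 := (hM _ (hmaps 1 (right_mem_Icc.2 zero_le_one))).continuousAt
    have hf1 : ContinuousAt f 1 :=
      (continuousAt_ofReal_cpow_const 1 (c + 1) (Or.inr one_ne_zero)).mul
        (hM1.comp (f := fun v : ℝ => x * v ^ 2) (by fun_prop))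
    simpa [f] using hf1.tendsto.mono_left nhdsWithin_le_nhds
  have hFTC := integral_eq_sub_of_hasDerivAt_of_tendsto zero_lt_one hderiv
    ((hint₁.const_mul (c + 1)).add (hint₂.const_mul (2 * x))) hlim₀ hlim₁
  rw [integral_add (hint₁.const_mul _) (hint₂.const_mul _), intervalIntegral.integral_const_mul,
    intervalIntegral.integral_const_mul] at hFTC
  simp only [eulerIntegral]
  linear_combination hFTC

end EulerIntegral

theorem exists_eulerODE_solution_of_zero_mem {t₀ t₁ : ℝ} (h0 : (0 : ℝ) ∈ Ioo t₀ t₁) {N : ℕ}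
    (hN : 1 ≤ N) {μ : ℂ} (hμ0 : μ ≠ 0) (hμ : μ.re ≤ 1) {M : ℝ → ℂ}
    (hM : ContDiffOn ℝ N M (Ioo t₀ t₁)) :
    ∃ L : ℝ → ℂ, ContDiffOn ℝ N L (Ioo t₀ t₁) ∧
      ∀ t ∈ Ioo t₀ t₁, 2 * t * deriv L t - μ * L t = M t := by
  obtain ⟨n, rfl⟩ : ∃ n, N = n + 1 := ⟨N - 1, by omega⟩
  have hM' : ContDiffOn ℝ n (deriv M) (Ioo t₀ t₁) := hM.deriv_of_isOpen isOpen_Ioo (by simp)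
  have hMd : ∀ t ∈ Ioo t₀ t₁, HasDerivAt (fun s => M s - M 0) (deriv M t) t := fun t ht =>
    (hM.hasDerivAt_deriv isOpen_Ioo (by simp) ht).sub_const _
  have hc : -2 ≤ (-1 - μ).re := by simp only [sub_re, neg_re, one_re]; linarith
  have hshift : -1 - μ + 2 = 1 - μ := by ring
  set L : ℝ → ℂ := fun t => eulerIntegral (-1 - μ) (fun s => M s - M 0) t - M 0 / μ
  have hL : ∀ t ∈ Ioo t₀ t₁, HasDerivAt L (eulerIntegral (1 - μ) (deriv M) t) t := fun t ht =>
    hshift ▸ (hasDerivAt_eulerIntegral h0 hc hMd hM'.continuousOn ht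
      (intervalIntegrable_ofReal_cpow_mul_comp_of_eq_zero h0 hc (sub_self _) hMd
        hM'.continuousOn ht)).sub_const (M 0 / μ)
  refine ⟨L, contDiffOn_succ_of_hasDerivAt isOpen_Ioo hL
    (contDiffOn_eulerIntegral h0 (by simp only [sub_re, one_re]; linarith) hM'), fun t ht => ?_⟩
  have key := two_mul_eulerIntegral_deriv_add_mul_eulerIntegral h0 hc (sub_self _) hMd
    hM'.continuousOn ht
  rw [hshift] at key
  rw [(hL t ht).deriv, mul_sub, mul_div_cancel₀ _ hμ0]
  linear_combination key

theorem hasDerivAt_cexp_mul_log {x : ℝ} (hx : x ≠ 0) (μ : ℂ) :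
    HasDerivAt (fun t : ℝ => cexp (μ * Real.log t)) (cexp (μ * Real.log x) * (μ / x)) x := by
  simpa [div_eq_mul_inv] using ((Real.hasDerivAt_log hx).ofReal_comp.const_mul μ).cexp

theorem contDiffOn_cexp_mul_log {s : Set ℝ} (hs : (0 : ℝ) ∉ s) (μ : ℂ) {n : WithTop ℕ∞} :
    ContDiffOn ℝ n (fun t : ℝ => cexp (μ * Real.log t)) s := fun t ht =>
  (contDiff_exp.contDiffAt.comp t (contDiffAt_const.mul
    (ofRealCLM.contDiff.contDiffAt.comp t (Real.contDiffAt_log.2 fun h => hs (h ▸ ht))))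
    ).contDiffWithinAt

theorem exists_eulerODE_solution_of_zero_notMem {t₀ t₁ : ℝ} (h0 : (0 : ℝ) ∉ Ioo t₀ t₁) {N : ℕ}
    (μ : ℂ) {M : ℝ → ℂ} (hM : ContDiffOn ℝ N M (Ioo t₀ t₁)) :
    ∃ L : ℝ → ℂ, ContDiffOn ℝ N L (Ioo t₀ t₁) ∧
      ∀ t ∈ Ioo t₀ t₁, 2 * t * deriv L t - μ * L t = M t := by
  rcases (Ioo t₀ t₁).eq_empty_or_nonempty with hempty | ⟨c, hc⟩
  · exact ⟨0, by simp [hempty]⟩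
  have hne : ∀ t ∈ Ioo t₀ t₁, t ≠ 0 := fun t ht h => h0 (h ▸ ht)
  -- `Real.log t = Real.log |t|`, so `w t = |t| ^ (μ / 2)` on either side of `0`
  set w : ℝ → ℂ := fun t => cexp (μ / 2 * Real.log t)
  set g : ℝ → ℂ := fun s => M s * (2 * s * w s)⁻¹
  have hg : ContDiffOn ℝ N g (Ioo t₀ t₁) :=
    hM.mul (((contDiffOn_const.mul (ofRealCLM.contDiff.comp_contDiffOn contDiffOn_id)).mul
      (contDiffOn_cexp_mul_log h0 _)).inv fun t ht => by simp [hne t ht])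
  have hF : ∀ t ∈ Ioo t₀ t₁, HasDerivAt (fun t => ∫ s in c..t, g s) (g t) t := fun t ht =>
    hasDerivAt_integral_of_continuousOn_s7 isOpen_Ioo ordConnected_Ioo hg.continuousOn hc ht
  refine ⟨fun t => w t * ∫ s in c..t, g s, (contDiffOn_cexp_mul_log h0 _).mul
    ((contDiffOn_succ_of_hasDerivAt isOpen_Ioo hF hg).of_le (by simp)), fun t ht => ?_⟩
  have hL : HasDerivAt (fun t => w t * ∫ s in c..t, g s) _ t :=
    (hasDerivAt_cexp_mul_log (hne t ht) (μ / 2)).mul (hF t ht)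
  have ht0 : (t : ℂ) ≠ 0 := ofReal_ne_zero.2 (hne t ht)
  rw [hL.deriv]
  simp only [g, w]
  field_simp
  ring

theorem re_im_eq_of_eulerODE {L : ℝ → ℂ} {t a m₁ m₂ : ℝ} (hL : DifferentiableAt ℝ L t)
    (h : 2 * t * deriv L t - (1 + a * I) * L t = m₁ + m₂ * I) :
    2 * t * deriv (fun t => (L t).re) t - (L t).re + a * (L t).im = m₁ ∧
      2 * t * deriv (fun t => (L t).im) t - (L t).im - a * (L t).re = m₂ := by
  have hLre : HasDerivAt (fun t => (L t).re) (deriv L t).re t :=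
    reCLM.hasFDerivAt.comp_hasDerivAt t hL.hasDerivAt
  have hLim : HasDerivAt (fun t => (L t).im) (deriv L t).im t :=
    imCLM.hasFDerivAt.comp_hasDerivAt t hL.hasDerivAt
  have hre := congr_arg re h
  have him := congr_arg im h
  simp only [sub_re, mul_re, re_ofNat, ofReal_re, im_ofNat, ofReal_im, mul_zero, sub_zero, mul_im,
    zero_mul, add_zero, add_re, one_re, I_re, I_im, mul_one, sub_self, one_mul, add_im, one_im,
    zero_add, sub_im] at hre him
  rw [hLre.deriv, hLim.deriv]
  constructor <;> linarith

theorem singular_ode_solvability_C (N : ℕ) (hN : 1 ≤ N) (t₀ t₁ : ℝ) (m₁ m₂ : ℝ → ℝ)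
    (hm₁ : ContDiffOn ℝ N m₁ (Set.Ioo t₀ t₁)) (hm₂ : ContDiffOn ℝ N m₂ (Set.Ioo t₀ t₁))
    (a : ℝ) :
    ∃ l₁ l₂ : ℝ → ℝ, ContDiffOn ℝ N l₁ (Set.Ioo t₀ t₁) ∧ ContDiffOn ℝ N l₂ (Set.Ioo t₀ t₁) ∧
      ∀ t ∈ Set.Ioo t₀ t₁,
        2 * t * deriv l₁ t - l₁ t + a * l₂ t = m₁ t ∧
        2 * t * deriv l₂ t - l₂ t - a * l₁ t = m₂ t := by
  set M : ℝ → ℂ := fun t => m₁ t + m₂ t * I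
  have hM : ContDiffOn ℝ N M (Ioo t₀ t₁) := (ofRealCLM.contDiff.comp_contDiffOn hm₁).add
    ((ofRealCLM.contDiff.comp_contDiffOn hm₂).mul contDiffOn_const)
  obtain ⟨L, hL, hODE⟩ : ∃ L : ℝ → ℂ, ContDiffOn ℝ N L (Ioo t₀ t₁) ∧
      ∀ t ∈ Ioo t₀ t₁, 2 * t * deriv L t - (1 + a * I) * L t = M t := by
    by_cases h0 : (0 : ℝ) ∈ Ioo t₀ t₁
    · exact exists_eulerODE_solution_of_zero_mem h0 hN (by simp [Complex.ext_iff]) (by simp) hM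
    · exact exists_eulerODE_solution_of_zero_notMem h0 _ hM
  refine ⟨fun t => (L t).re, fun t => (L t).im, reCLM.contDiff.comp_contDiffOn hL,
    imCLM.contDiff.comp_contDiffOn hL, fun t ht => re_im_eq_of_eulerODE ?_ (hODE t ht)⟩
  exact (hL.hasDerivAt_deriv isOpen_Ioo (by positivity) ht).differentiableAt
end

section
/- Let η be a smooth function of τ and let g = g(τ, z) be a C² solution of g_τ + (η(τ) − 2) z^{-1} g_z − g_zz = 0 on a domain with z ≠ 0. Fix a point (τ₀, z₀) in the domain and define f(τ, z) = ∫_{z₀}^{z} z' g(τ, z') dz' + ∫_{τ₀}^{τ} ( z₀ g_z(τ', z₀) − (η(τ') − 1) g(τ', z₀) ) dτ'. Then f solves f_τ + η(τ) z^{-1} f_z − f_zz = 0. -/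
open Set MeasureTheory intervalIntegral

/-- If `g` solves `g_τ + (η(τ) − 2) z⁻¹ g_z − g_zz = 0` on a rectangle with `z > 0`, then
`f(τ,z) = ∫_{z₀}^z z' g(τ,z') dz' + ∫_{τ₀}^τ (z₀ g_z(τ',z₀) − (η(τ')−1) g(τ',z₀)) dτ'`
solves `f_τ + η(τ) z⁻¹ f_z − f_zz = 0`. -/
theorem integral_construction_solution (η : ℝ → ℝ) (hη : ContDiff ℝ (⊤ : ℕ∞) η)
    (a b c d : ℝ) (hc : 0 < c) (g : ℝ → ℝ → ℝ)
    (hg : ContDiffOn ℝ 2 (fun q : ℝ × ℝ => g q.1 q.2) (Set.Ioo a b ×ˢ Set.Ioo c d))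
    (hpde : ∀ τ ∈ Set.Ioo a b, ∀ z ∈ Set.Ioo c d,
      deriv (fun s => g s z) τ + (η τ - 2) * z⁻¹ * deriv (g τ) z
        - deriv (deriv (g τ)) z = 0)
    (τ₀ z₀ : ℝ) (hτ₀ : τ₀ ∈ Set.Ioo a b) (hz₀ : z₀ ∈ Set.Ioo c d)
    (f : ℝ → ℝ → ℝ)
    (hf : ∀ τ z, f τ z = (∫ z' in z₀..z, z' * g τ z')
      + ∫ τ' in τ₀..τ, (z₀ * deriv (g τ') z₀ - (η τ' - 1) * g τ' z₀)) :
    ∀ τ ∈ Set.Ioo a b, ∀ z ∈ Set.Ioo c d,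
      deriv (fun s => f s z) τ + η τ * z⁻¹ * deriv (f τ) z
        - deriv (deriv (f τ)) z = 0 := by
  set U : Set (ℝ × ℝ) := Set.Ioo a b ×ˢ Set.Ioo c d with hUdef
  have hU : IsOpen U := isOpen_Ioo.prod isOpen_Ioo
  set G : ℝ × ℝ → ℝ := fun q => g q.1 q.2 with hGdef
  have hGcont : ContinuousOn G U := hg.continuousOn
  have hGdiffOn : DifferentiableOn ℝ G U := hg.differentiableOn (by norm_num)
  -- joint differentiability at points of U
  have hGfd : ∀ q ∈ U, HasFDerivAt G (fderiv ℝ G q) q := fun q hq =>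
    ((hGdiffOn q hq).differentiableAt (hU.mem_nhds hq)).hasFDerivAt
  set Gz : ℝ × ℝ → ℝ := fun q => fderiv ℝ G q (0, 1) with hGzdef
  set Gτ : ℝ × ℝ → ℝ := fun q => fderiv ℝ G q (1, 0) with hGτdef
  have hfd1 : ContDiffOn ℝ 1 (fderiv ℝ G) U := hg.fderiv_of_isOpen hU (by norm_num)
  have hGz1 : ContDiffOn ℝ 1 Gz U := hfd1.clm_apply contDiffOn_const
  have hGτ1 : ContDiffOn ℝ 1 Gτ U := hfd1.clm_apply contDiffOn_const
  have hGzfd : ∀ q ∈ U, HasFDerivAt Gz (fderiv ℝ Gz q) q := fun q hq =>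
    (((hGz1.differentiableOn one_ne_zero) q hq).differentiableAt (hU.mem_nhds hq)).hasFDerivAt
  set Gzz : ℝ × ℝ → ℝ := fun q => fderiv ℝ Gz q (0, 1) with hGzzdef
  -- vertical/horizontal line maps
  have hline_z : ∀ (τ z : ℝ), HasDerivAt (fun t : ℝ => ((τ, t) : ℝ × ℝ)) (0, 1) z :=
    fun τ z => (hasDerivAt_const z τ).prodMk (hasDerivAt_id z)
  have hline_τ : ∀ (τ z : ℝ), HasDerivAt (fun s : ℝ => ((s, z) : ℝ × ℝ)) (1, 0) τ :=
    fun τ z => (hasDerivAt_id τ).prodMk (hasDerivAt_const τ z)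
  -- partial derivatives as derivs
  have hgz : ∀ {τ z : ℝ}, (τ, z) ∈ U → HasDerivAt (fun t => G (τ, t)) (Gz (τ, z)) z :=
    fun {τ z} hq => (hGfd _ hq).comp_hasDerivAt z (hline_z τ z)
  have hgτ : ∀ {τ z : ℝ}, (τ, z) ∈ U → HasDerivAt (fun s => G (s, z)) (Gτ (τ, z)) τ :=
    fun {τ z} hq => by
      have h := (hGfd (τ, z) hq).comp_hasDerivAt τ (hline_τ τ z); exact h
  have hgzz : ∀ {τ z : ℝ}, (τ, z) ∈ U → HasDerivAt (fun t => Gz (τ, t)) (Gzz (τ, z)) z :=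
    fun {τ z} hq => (hGzfd _ hq).comp_hasDerivAt z (hline_z τ z)
  -- PDE in terms of Gτ, Gz, Gzz
  have hpdeG : ∀ q ∈ U, Gτ q + (η q.1 - 2) * q.2⁻¹ * Gz q - Gzz q = 0 := by
    rintro ⟨τ, z⟩ hq
    have hq1 : τ ∈ Set.Ioo a b := hq.1
    have hq2 : z ∈ Set.Ioo c d := hq.2
    have e1 : deriv (fun s => g s z) τ = Gτ (τ, z) := (hgτ hq).deriv
    have e2 : deriv (g τ) z = Gz (τ, z) := (hgz hq).deriv
    have e3 : deriv (deriv (g τ)) z = Gzz (τ, z) := by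
      have heq : deriv (g τ) =ᶠ[nhds z] fun t => Gz (τ, t) := by
        filter_upwards [isOpen_Ioo.mem_nhds hq2] with t ht
        exact (hgz (Set.mk_mem_prod hq1 ht)).deriv
      rw [heq.deriv_eq]
      exact (hgzz hq).deriv
    have := hpde τ hq1 z hq2
    rw [e1, e2, e3] at this
    exact this
  -- main computation
  intro τ hτ z hz
  have hτz : (τ, z) ∈ U := Set.mk_mem_prod hτ hz
  have hzne : ∀ t ∈ Set.Ioo c d, t ≠ 0 := fun t ht => (hc.trans ht.1).ne'
  -- the potential w(t) = t * Gz(τ,t) - (η τ - 1) * G(τ,t)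
  set w : ℝ → ℝ := fun t => t * Gz (τ, t) - (η τ - 1) * G (τ, t) with hwdef
  have hw : ∀ t ∈ Set.Ioo c d, HasDerivAt w (t * Gτ (τ, t)) t := by
    intro t ht
    have hq : (τ, t) ∈ U := Set.mk_mem_prod hτ ht
    have h1 : HasDerivAt (fun t => t * Gz (τ, t))
        (1 * Gz (τ, t) + t * Gzz (τ, t)) t := (hasDerivAt_id t).mul (hgzz hq)
    have h2 : HasDerivAt (fun t => (η τ - 1) * G (τ, t))
        ((η τ - 1) * Gz (τ, t)) t := (hgz hq).const_mul _
    have h3 := h1.sub h2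
    have hpt := hpdeG (τ, t) hq
    have htne : t ≠ 0 := hzne t ht
    have : 1 * Gz (τ, t) + t * Gzz (τ, t) - (η τ - 1) * Gz (τ, t) = t * Gτ (τ, t) := by
      have : Gτ (τ, t) = Gzz (τ, t) - (η τ - 2) * t⁻¹ * Gz (τ, t) := by linarith
      rw [this]; field_simp; ring
    rwa [this] at h3
  -- continuity facts
  have hGτcont : ContinuousOn Gτ U := hGτ1.continuousOn
  have hGzcont : ContinuousOn Gz U := hGz1.continuousOn
  have huIcc : Set.uIcc z₀ z ⊆ Set.Ioo c d := Set.ordConnected_Ioo.uIcc_subset hz₀ hz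
  have hslice : ∀ s ∈ Set.Ioo a b, Set.MapsTo (fun t : ℝ => ((s, t) : ℝ × ℝ)) (Set.Ioo c d) U :=
    fun s hs t ht => Set.mk_mem_prod hs ht
  have hφcont : ∀ s ∈ Set.Ioo a b, ContinuousOn (fun t => t * g s t) (Set.Ioo c d) := by
    intro s hs
    exact continuousOn_id.mul (hGcont.comp ((continuous_const.prodMk continuous_id).continuousOn)
      (hslice s hs))
  -- z-derivative of f τ
  have hfz : ∀ z' ∈ Set.Ioo c d, HasDerivAt (f τ) (z' * G (τ, z')) z' := by
    intro z' hz'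
    have hfτ : f τ = fun z => (∫ t in z₀..z, t * g τ t)
        + ∫ τ' in τ₀..τ, (z₀ * deriv (g τ') z₀ - (η τ' - 1) * g τ' z₀) := funext (hf τ)
    rw [hfτ]
    have hint : IntervalIntegrable (fun t => t * g τ t) volume z₀ z' :=
      ((hφcont τ hτ).mono (Set.ordConnected_Ioo.uIcc_subset hz₀ hz')).intervalIntegrable
    have hmeas := ContinuousOn.stronglyMeasurableAtFilter (μ := volume) isOpen_Ioo
      (hφcont τ hτ) z' hz'
    have hca : ContinuousAt (fun t => t * g τ t) z' :=
      (hφcont τ hτ).continuousAt (isOpen_Ioo.mem_nhds hz')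
    exact (intervalIntegral.integral_hasDerivAt_right hint hmeas hca).add_const _
  have hderiv_fz : deriv (f τ) z = z * G (τ, z) := (hfz z hz).deriv
  -- second z-derivative
  have hderiv_fzz : deriv (deriv (f τ)) z = G (τ, z) + z * Gz (τ, z) := by
    have heq : deriv (f τ) =ᶠ[nhds z] fun t => t * G (τ, t) := by
      filter_upwards [isOpen_Ioo.mem_nhds hz] with t ht
      exact (hfz t ht).deriv
    rw [heq.deriv_eq]
    have := (hasDerivAt_id z).mul (hgz hτz)
    rw [one_mul] at this
    exact this.deriv
  -- τ-derivative of the integral in τ (FTC part)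
  set L : ℝ → ℝ := fun τ' => z₀ * deriv (g τ') z₀ - (η τ' - 1) * g τ' z₀ with hLdef
  have hLeq : Set.EqOn L (fun τ' => z₀ * Gz (τ', z₀) - (η τ' - 1) * G (τ', z₀)) (Set.Ioo a b) := by
    intro τ' hτ'
    simp only [hLdef]
    rw [(hgz (Set.mk_mem_prod hτ' hz₀)).deriv]
  have hψcont : ContinuousOn (fun τ' => z₀ * Gz (τ', z₀) - (η τ' - 1) * G (τ', z₀))
      (Set.Ioo a b) := by
    have hmap : Set.MapsTo (fun s : ℝ => ((s, z₀) : ℝ × ℝ)) (Set.Ioo a b) U :=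
      fun s hs => Set.mk_mem_prod hs hz₀
    have hcomp : ContinuousOn (fun s : ℝ => ((s, z₀) : ℝ × ℝ)) (Set.Ioo a b) :=
      (continuous_id.prodMk continuous_const).continuousOn
    exact (continuousOn_const.mul (hGzcont.comp hcomp hmap)).sub
      (((hη.continuous.continuousOn).sub continuousOn_const).mul (hGcont.comp hcomp hmap))
  have hLcont : ContinuousOn L (Set.Ioo a b) := hψcont.congr hLeq
  have hH : HasDerivAt (fun s => ∫ τ' in τ₀..s, L τ') (L τ) τ := by
    have hsub := Set.ordConnected_Ioo.uIcc_subset hτ₀ hτ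
    exact intervalIntegral.integral_hasDerivAt_right
      ((hLcont.mono hsub).intervalIntegrable)
      (ContinuousOn.stronglyMeasurableAtFilter (μ := volume) isOpen_Ioo hLcont τ hτ)
      (hLcont.continuousAt (isOpen_Ioo.mem_nhds hτ))
  -- differentiation under the integral sign
  have hF : HasDerivAt (fun s => ∫ t in z₀..z, t * g s t)
      (∫ t in z₀..z, t * Gτ (τ, t)) τ := by
    obtain ⟨ε, hε, hball⟩ := Metric.isOpen_iff.1 isOpen_Ioo τ hτ
    have hcb : Metric.closedBall τ (ε / 2) ⊆ Set.Ioo a b :=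
      (Metric.closedBall_subset_ball (by linarith)).trans hball
    set K : Set (ℝ × ℝ) := Metric.closedBall τ (ε / 2) ×ˢ Set.uIcc z₀ z with hKdef
    have hKU : K ⊆ U := Set.prod_mono hcb huIcc
    have hKcomp : IsCompact K := (isCompact_closedBall _ _).prod isCompact_uIcc
    have hcontK : ContinuousOn (fun q : ℝ × ℝ => q.2 * Gτ q) K :=
      ((continuous_snd.continuousOn).mul (hGτcont.mono hKU))
    obtain ⟨C, hC⟩ := hKcomp.exists_bound_of_continuousOn hcontK
    have hIsub : Set.uIoc z₀ z ⊆ Set.Ioo c d := Set.uIoc_subset_uIcc.trans huIcc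
    have hImeas : MeasurableSet (Set.uIoc z₀ z) := measurableSet_uIoc
    refine (intervalIntegral.hasDerivAt_integral_of_dominated_loc_of_deriv_le
      (F := fun s t => t * g s t) (F' := fun s t => t * Gτ (s, t)) (bound := fun _ => C)
      (Metric.ball_mem_nhds τ (half_pos hε)) ?_ ?_ ?_ ?_ ?_ ?_).2
    · filter_upwards [isOpen_Ioo.mem_nhds hτ] with s hs
      exact (((hφcont s hs).mono hIsub)).aestronglyMeasurable hImeas
    · exact ((hφcont τ hτ).mono huIcc).intervalIntegrable
    · have : ContinuousOn (fun t => t * Gτ (τ, t)) (Set.Ioo c d) :=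
        continuousOn_id.mul (hGτcont.comp ((continuous_const.prodMk continuous_id).continuousOn)
          (hslice τ hτ))
      exact (this.mono hIsub).aestronglyMeasurable hImeas
    · refine Filter.Eventually.of_forall ?_
      intro t ht x hx
      exact hC (x, t) ⟨Metric.ball_subset_closedBall hx, Set.uIoc_subset_uIcc ht⟩
    · exact intervalIntegrable_const
    · refine Filter.Eventually.of_forall ?_
      intro t ht x hx
      have hxab : x ∈ Set.Ioo a b := hcb (Metric.ball_subset_closedBall hx)
      have htcd : t ∈ Set.Ioo c d := hIsub ht
      exact (hgτ (Set.mk_mem_prod hxab htcd)).const_mul t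
  -- evaluate the integral of t * Gτ(τ,t)
  have hFTC : (∫ t in z₀..z, t * Gτ (τ, t)) = w z - w z₀ := by
    refine intervalIntegral.integral_eq_sub_of_hasDerivAt (fun t ht => hw t (huIcc ht)) ?_
    have : ContinuousOn (fun t => t * Gτ (τ, t)) (Set.Ioo c d) :=
      continuousOn_id.mul (hGτcont.comp ((continuous_const.prodMk continuous_id).continuousOn)
        (hslice τ hτ))
    exact (this.mono huIcc).intervalIntegrable
  -- τ-derivative of f
  have hderiv_fτ : deriv (fun s => f s z) τ = w z := by
    have hfs : (fun s => f s z) = fun s => (∫ t in z₀..z, t * g s t)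
        + ∫ τ' in τ₀..s, L τ' := funext fun s => hf s z
    rw [hfs]
    have : deriv (fun s => (∫ t in z₀..z, t * g s t) + ∫ τ' in τ₀..s, L τ') τ = _ :=
      (hF.add hH).deriv
    rw [this, hFTC]
    have hLτ : L τ = w z₀ := hLeq hτ
    rw [hLτ]; ring
  -- conclude
  rw [hderiv_fτ, hderiv_fz, hderiv_fzz, hwdef]
  have hzne' : z ≠ 0 := hzne z hz
  field_simp
  ring
end

section
/- Let η be a continuous function of τ, let N ≥ 1, and let T⁰, …, T^N be C¹ functions of τ satisfying (T^k)'(τ) + (2k+2)(η(τ) − 2k − 1) T^{k+1}(τ) = 0 for k = 0, …, N−1 and (T^N)'(τ) = 0. Then f(τ, z) = Σ_{k=0}^{N} T^k(τ) z^{2k} is a solution of f_τ + η(τ) z^{-1} f_z − f_zz = 0 for z ≠ 0. -/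
/-! Term by term, `η z⁻¹ ∂_z − ∂_zz` sends `z ^ (2k+2)` to `(2k+2)(η − 2k − 1) z ^ (2k)` and
kills constants. Hence the coefficient of `z ^ (2k)` in `f_τ + η z⁻¹ f_z − f_zz` is the left side
of the recurrence for `k < N`, and `(T^N)' = 0` for `k = N`. -/

open Finset

theorem deriv_sum_mul_const {S : Finset ℕ} {T : ℕ → ℝ → ℝ} {τ : ℝ}
    (hT : ∀ k ∈ S, DifferentiableAt ℝ (T k) τ) (w : ℕ → ℝ) :
    deriv (fun s => ∑ k ∈ S, T k s * w k) τ = ∑ k ∈ S, deriv (T k) τ * w k := by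
  rw [deriv_fun_sum fun k hk => (hT k hk).mul_const (w k)]
  exact sum_congr rfl fun k hk => deriv_mul_const (hT k hk) (w k)

theorem hasDerivAt_sum_mul_pow_succ (S : Finset ℕ) (c : ℕ → ℝ) (e : ℕ → ℕ) (y : ℝ) :
    HasDerivAt (fun y => ∑ k ∈ S, c k * y ^ (e k + 1))
      (∑ k ∈ S, ((e k : ℝ) + 1) * c k * y ^ e k) y := by
  refine HasDerivAt.fun_sum fun k _ =>
    ((hasDerivAt_pow (e k + 1) y).const_mul (c k)).congr_deriv ?_
  rw [Nat.add_sub_cancel]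
  push_cast
  ring

theorem mul_inv_mul_deriv_sub_deriv_deriv_sum_mul_pow_two_mul (a : ℕ → ℝ) (n : ℕ) (e : ℝ)
    {z : ℝ} (hz : z ≠ 0) :
    e * z⁻¹ * deriv (fun y => ∑ k ∈ range (n + 1), a k * y ^ (2 * k)) z
        - deriv (deriv fun y => ∑ k ∈ range (n + 1), a k * y ^ (2 * k)) z
      = ∑ k ∈ range n, (2 * (k : ℝ) + 2) * (e - 2 * k - 1) * a (k + 1) * z ^ (2 * k) := by
  have hshift : (fun y => ∑ k ∈ range (n + 1), a k * y ^ (2 * k))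
      = fun y => a 0 + ∑ k ∈ range n, a (k + 1) * y ^ (2 * k + 1 + 1) := by
    funext y
    rw [sum_range_succ']
    simp only [mul_zero, pow_zero, mul_one, mul_add, add_comm (a 0)]
  have hderiv : deriv (fun y => ∑ k ∈ range (n + 1), a k * y ^ (2 * k))
      = fun y => ∑ k ∈ range n, (((2 * k + 1 : ℕ) : ℝ) + 1) * a (k + 1) * y ^ (2 * k + 1) := by
    funext y
    rw [hshift]
    exact ((hasDerivAt_sum_mul_pow_succ _ (fun k => a (k + 1)) (fun k => 2 * k + 1) y).const_add
      (a 0)).deriv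
  rw [hderiv, (hasDerivAt_sum_mul_pow_succ _ _ (fun k => 2 * k) z).deriv, mul_sum,
    ← sum_sub_distrib]
  refine sum_congr rfl fun k _ => ?_
  push_cast
  field_simp
  ring

theorem polynomial_solutions_general (η : ℝ → ℝ) (N : ℕ)
    (T : ℕ → ℝ → ℝ) (hT : ∀ k ≤ N, ContDiff ℝ 1 (T k))
    (hrec : ∀ k < N, ∀ τ : ℝ,
      deriv (T k) τ + (2 * (k : ℝ) + 2) * (η τ - 2 * (k : ℝ) - 1) * T (k + 1) τ = 0)
    (hTN : ∀ τ : ℝ, deriv (T N) τ = 0)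
    (f : ℝ → ℝ → ℝ)
    (hf : ∀ τ z, f τ z = ∑ k ∈ Finset.range (N + 1), T k τ * z ^ (2 * k)) :
    ∀ τ z : ℝ, z ≠ 0 →
      deriv (fun s => f s z) τ + η τ * z⁻¹ * deriv (f τ) z
        - deriv (deriv (f τ)) z = 0 := by
  intro τ z hz
  have hdiff : ∀ k ∈ range (N + 1), DifferentiableAt ℝ (T k) τ := fun k hk =>
    ((hT k (mem_range_succ_iff.mp hk)).differentiable one_ne_zero) τ
  rw [show (fun s => f s z) = _ from funext fun s => hf s z, show f τ = _ from funext (hf τ),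
    add_sub_assoc, deriv_sum_mul_const hdiff,
    mul_inv_mul_deriv_sub_deriv_deriv_sum_mul_pow_two_mul _ _ _ hz, sum_range_succ, hTN,
    zero_mul, add_zero, ← sum_add_distrib]
  exact sum_eq_zero fun k hk => by rw [← add_mul, hrec k (mem_range.mp hk), zero_mul]

theorem polynomial_solutions (η : ℝ → ℝ) (hη : Continuous η) (N : ℕ) (hN : 1 ≤ N)
    (T : ℕ → ℝ → ℝ) (hT : ∀ k ≤ N, ContDiff ℝ 1 (T k))
    (hrec : ∀ k < N, ∀ τ : ℝ,
      deriv (T k) τ + (2 * (k : ℝ) + 2) * (η τ - 2 * (k : ℝ) - 1) * T (k + 1) τ = 0)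
    (hTN : ∀ τ : ℝ, deriv (T N) τ = 0)
    (f : ℝ → ℝ → ℝ)
    (hf : ∀ τ z, f τ z = ∑ k ∈ Finset.range (N + 1), T k τ * z ^ (2 * k)) :
    ∀ τ z : ℝ, z ≠ 0 →
      deriv (fun s => f s z) τ + η τ * z⁻¹ * deriv (f τ) z
        - deriv (deriv (f τ)) z = 0 :=
  polynomial_solutions_general η N T hT hrec hTN f hf
end

section
/- Let η be a continuous function of τ, let C ∈ ℝ and C₀ ∈ ℝ. On the region where 2τ + C > 0, the function f(τ, z) = C₀ exp( −z²/(4τ + 2C) + ∫_{τ₀}^{τ} (η(s) − 1)/(2s + C) ds ) is a solution of f_τ + η(τ) z^{-1} f_z − f_zz = 0 for z ≠ 0. -/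
/-! Write `a = 2τ + C`, so the exponent is `-z²/(2a) + I(τ)` with `I' = (η - 1)/a` by the
fundamental theorem of calculus (the interval from `τ₀` to `τ` stays in `2s + C > 0`). Then
`f_z = -(z/a) f`, `f_zz = (z²/a² - 1/a) f` and `f_τ = (z²/a² + (η - 1)/a) f`, and the three
terms of the equation cancel. -/

open Real Set

theorem hasDerivAt_integral_of_continuousOn_s12 {g : ℝ → ℝ} {U : Set ℝ} {a b : ℝ} (hU : IsOpen U)
    (hg : ContinuousOn g U) (hab : uIcc a b ⊆ U) :
    HasDerivAt (fun t => ∫ s in a..t, g s) (g b) b := by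
  have hb : b ∈ U := hab right_mem_uIcc
  exact intervalIntegral.integral_hasDerivAt_right ((hg.mono hab).intervalIntegrable)
    (hg.stronglyMeasurableAtFilter hU b hb) (hg.continuousAt (hU.mem_nhds hb))

section Gaussian

variable (c b K : ℝ)

theorem hasDerivAt_gaussian (y : ℝ) :
    HasDerivAt (fun y => c * exp (-(y ^ 2) / b + K))
      (-(2 * y / b) * (c * exp (-(y ^ 2) / b + K))) y := by
  have hexponent : HasDerivAt (fun y : ℝ => -(y ^ 2) / b + K) (-(2 * y) / b) y := by
    simpa using ((hasDerivAt_pow 2 y).neg.div_const b).add_const K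
  exact (hexponent.exp.const_mul c).congr_deriv (by ring)

theorem deriv_gaussian :
    deriv (fun y => c * exp (-(y ^ 2) / b + K)) =
      fun y => -(2 * y / b) * (c * exp (-(y ^ 2) / b + K)) :=
  funext fun y => (hasDerivAt_gaussian c b K y).deriv

theorem deriv_deriv_gaussian (z : ℝ) :
    deriv (deriv fun y => c * exp (-(y ^ 2) / b + K)) z =
      (4 * z ^ 2 / b ^ 2 - 2 / b) * (c * exp (-(z ^ 2) / b + K)) := by
  have hslope : HasDerivAt (fun y : ℝ => -(2 * y / b)) (-(2 / b)) z := by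
    simpa using (((hasDerivAt_id' z).const_mul 2).div_const b).fun_neg
  rw [deriv_gaussian, (hslope.fun_mul (hasDerivAt_gaussian c b K z)).deriv]
  ring

end Gaussian

theorem hasDerivAt_gaussian_of_width {c z τ b' F' : ℝ} {b F : ℝ → ℝ}
    (hb : HasDerivAt b b' τ) (hbτ : b τ ≠ 0) (hF : HasDerivAt F F' τ) :
    HasDerivAt (fun t => c * exp (-(z ^ 2) / b t + F t))
      ((z ^ 2 * b' / b τ ^ 2 + F') * (c * exp (-(z ^ 2) / b τ + F τ))) τ := by
  have hexponent := ((hasDerivAt_const τ (-(z ^ 2))).fun_div hb hbτ).fun_add hF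
  exact (hexponent.exp.const_mul c).congr_deriv (by ring)

theorem gaussian_type_solution (η : ℝ → ℝ) (hη : Continuous η) (C C₀ τ₀ : ℝ)
    (hτ₀ : 2 * τ₀ + C > 0) (f : ℝ → ℝ → ℝ)
    (hf : ∀ τ z, f τ z = C₀ * Real.exp (-(z ^ 2) / (4 * τ + 2 * C)
      + ∫ s in τ₀..τ, (η s - 1) / (2 * s + C))) :
    ∀ τ : ℝ, 2 * τ + C > 0 → ∀ z : ℝ, z ≠ 0 →
      deriv (fun s => f s z) τ + η τ * z⁻¹ * deriv (f τ) z
        - deriv (deriv (f τ)) z = 0 := by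
  intro τ hτ z hz
  obtain rfl : f = _ := funext₂ hf
  set U := Ioi (-C / 2)
  have hU : ∀ s, s ∈ U ↔ 2 * s + C > 0 := fun s => by
    simp only [U, mem_Ioi]; constructor <;> intro <;> linarith
  have hcoeff : ContinuousOn (fun s => (η s - 1) / (2 * s + C)) U :=
    (hη.sub continuous_const).continuousOn.div (by fun_prop) fun s hs => ((hU s).1 hs).ne'
  have hintegral := hasDerivAt_integral_of_continuousOn_s12 isOpen_Ioi hcoeff
    (ordConnected_Ioi.uIcc_subset ((hU τ₀).2 hτ₀) ((hU τ).2 hτ))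
  have hwidth : HasDerivAt (fun t : ℝ => 4 * t + 2 * C) 4 τ := by
    simpa using ((hasDerivAt_id τ).const_mul 4).add_const (2 * C)
  rw [(hasDerivAt_gaussian_of_width hwidth (by linarith) hintegral).deriv, deriv_deriv_gaussian,
    deriv_gaussian]
  rw [show 4 * τ + 2 * C = 2 * (2 * τ + C) by ring]
  field_simp
  ring
end
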